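/- S_n / n converges in distribution, as n → ∞, to the five-point law p²·δ_{p−q} + pr·δ_{(p−q)/2} + (pq + q² + r)·δ_0 + qr·δ_{−(p−q)/2} + pq·δ_{−(p−q)}. Moreover E(S_n/n) → ((p−q)²/2)·(1 + p − q) and Var(S_n/n) → ((p−q)²/4)·((p+q)(1 + 3p − q) − (p−q)²·(1 + (p−q))²) as n → ∞. -/

import Mathlib

/-!
Put `Y = (p - q) (X₁ + X₂) / 2`. For `n ≥ 2` the transition rule gives
`E[X_{n+1} | X₁, …, X_n] = Y`, so each increment `X_{n+1} - Y` is orthogonal to everything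
known at time `n`, in particular to `S_n - n Y`. Hence `E[(S_n - n Y)²]` grows only linearly,
`S_n / n → Y` in `L²` and so in probability. As `S_n / n` and `Y` stay in `[-1, 1]`, this gives
`E g(S_n / n) → E g(Y)` for every continuous `g`: bounded ones (the weak limit), `x` and `x²`
(mean and variance). The law of `Y` is read off the joint law of `(X₁, X₂)`, which the first
two rules determine: `P(X₁ = a, X₂ = ±1)` comes from integrating the conditional probability
over `{X₁ = a}`, and `P(X₁ = a, X₂ = 0)` by complement.
-/

open MeasureTheory ProbabilityTheory Filter Real
open scoped ENNReal NNReal Topology Classical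

noncomputable section

/-- The σ-algebra `σ(X_1, …, X_n)` generated by the first `n` steps. -/
def sigmaUpTo {Ω : Type*} (X : ℕ → Ω → ℝ) (n : ℕ) : MeasurableSpace Ω :=
  MeasurableSpace.comap (fun ω (k : Fin n) => X ((k : ℕ) + 1) ω) inferInstance

/-- Weak convergence of a sequence of measures on `ℝ` (convergence in distribution):
integrals of every bounded continuous function converge. -/
def TendstoInDist (μs : ℕ → Measure ℝ) (ν : Measure ℝ) : Prop :=
  ∀ f : BoundedContinuousFunction ℝ ℝ,
    Tendsto (fun n => ∫ x, f x ∂(μs n)) atTop (𝓝 (∫ x, f x ∂ν))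

section General

variable {Ω : Type*} {m m₀ : MeasurableSpace Ω} {P : Measure Ω}

theorem tendsto_integral_comp_of_tendstoInMeasure [IsFiniteMeasure P] {Z : ℕ → Ω → ℝ}
    {Y : Ω → ℝ} (h : TendstoInMeasure P Z atTop Y) (hZ : ∀ n, AEStronglyMeasurable (Z n) P)
    {g : ℝ → ℝ} (hg : Continuous g) {C : ℝ} (hC : ∀ n ω, |g (Z n ω)| ≤ C) :
    Tendsto (fun n => ∫ ω, g (Z n ω) ∂P) atTop (𝓝 (∫ ω, g (Y ω) ∂P)) := by
  refine tendsto_of_subseq_tendsto fun ns hns => ?_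
  obtain ⟨ms, -, hae⟩ := (h.comp hns).exists_seq_tendsto_ae
  exact ⟨ms, tendsto_integral_of_dominated_convergence (fun _ => C)
    (fun i => hg.comp_aestronglyMeasurable (hZ _)) (integrable_const C)
    (fun i => ae_of_all _ (hC _)) (hae.mono fun ω hω => (hg.tendsto _).comp hω)⟩

theorem tendstoInMeasure_of_tendsto_integral_sq_sub [IsFiniteMeasure P] {ι : Type*}
    {l : Filter ι} {Z : ι → Ω → ℝ} {Y : Ω → ℝ}
    (hint : ∀ i, Integrable (fun ω => (Z i ω - Y ω) ^ 2) P)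
    (h : Tendsto (fun i => ∫ ω, (Z i ω - Y ω) ^ 2 ∂P) l (𝓝 0)) :
    TendstoInMeasure P Z l Y := by
  refine tendstoInMeasure_iff_measureReal_dist.mpr fun ε hε => ?_
  refine squeeze_zero (fun _ => measureReal_nonneg) (fun i => ?_)
    (by simpa using h.div_const (ε ^ 2))
  have hsub : {ω | ε ≤ dist (Z i ω) (Y ω)} ⊆ {ω | ε ^ 2 ≤ (Z i ω - Y ω) ^ 2} := fun ω hω => by
    simpa [Real.dist_eq, sq_abs] using pow_le_pow_left₀ hε.le hω 2
  rw [le_div_iff₀ (by positivity), mul_comm]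
  exact (mul_le_mul_of_nonneg_left (measureReal_mono hsub) (by positivity)).trans
    (mul_meas_ge_le_integral_of_nonneg (ae_of_all _ fun _ => sq_nonneg _) (hint i) _)

theorem integral_sq_add_of_condExp_eq_zero [IsFiniteMeasure P] (hm : m ≤ m₀) {U V : Ω → ℝ}
    (hUm : StronglyMeasurable[m] U) (hU : MemLp U 2 P) (hV : MemLp V 2 P)
    (hVm : P[V|m] =ᵐ[P] 0) :
    ∫ ω, (U ω + V ω) ^ 2 ∂P = ∫ ω, U ω ^ 2 ∂P + ∫ ω, V ω ^ 2 ∂P := by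
  have hUV : Integrable (U * V) P := hU.integrable_mul hV
  have hcross : ∫ ω, U ω * V ω ∂P = 0 := by
    calc ∫ ω, U ω * V ω ∂P = ∫ ω, P[U * V|m] ω ∂P := (integral_condExp hm).symm
      _ = ∫ _ω, (0 : ℝ) ∂P := integral_congr_ae <|
          (condExp_mul_of_stronglyMeasurable_left hUm hUV (hV.integrable one_le_two)).trans
            (hVm.mono fun ω hω => by simp [hω])
      _ = 0 := integral_zero _ _
  have hexp : (fun ω => (U ω + V ω) ^ 2) = fun ω => U ω ^ 2 + 2 * (U ω * V ω) + V ω ^ 2 := by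
    ext ω; ring
  rw [hexp, integral_add (by exact hU.integrable_sq.add (hUV.const_mul 2)) hV.integrable_sq,
    integral_add hU.integrable_sq (by exact hUV.const_mul 2), integral_const_mul, hcross]
  ring

theorem measureReal_inter_eq_mul_of_condExp_indicator [IsFiniteMeasure P] (hm : m ≤ m₀)
    {A B : Set Ω} (hA : MeasurableSet[m] A) (hB : MeasurableSet B) {f : Ω → ℝ} {c : ℝ}
    (h : P[B.indicator (fun _ => (1 : ℝ))|m] =ᵐ[P] f) (hf : ∀ ω ∈ A, f ω = c) :
    P.real (A ∩ B) = c * P.real A := by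
  calc P.real (A ∩ B) = ∫ ω in A, B.indicator (fun _ => (1 : ℝ)) ω ∂P := by
        simp [setIntegral_indicator hB]
    _ = ∫ ω in A, P[B.indicator (fun _ => (1 : ℝ))|m] ω ∂P :=
        (setIntegral_condExp hm ((integrable_const 1).indicator hB) hA).symm
    _ = ∫ _ω in A, c ∂P :=
        setIntegral_congr_ae (hm _ hA) (h.mono fun ω hω hωA => hω.trans (hf ω hωA))
    _ = c * P.real A := by simp [mul_comm]

theorem integral_comp_eq_sum_of_forall_mem [IsFiniteMeasure P] {α : Type*} [MeasurableSpace α]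
    [MeasurableSingletonClass α] {W : Ω → α} (hW : Measurable W) {s : Finset α}
    (hs : ∀ ω, W ω ∈ s) (g : α → ℝ) :
    ∫ ω, g (W ω) ∂P = ∑ x ∈ s, P.real {ω | W ω = x} * g x := by
  have hfib : ∀ x, MeasurableSet {ω | W ω = x} := fun x => hW (measurableSet_singleton x)
  have hpt : (fun ω => g (W ω)) = fun ω => ∑ x ∈ s, {ω | W ω = x}.indicator (fun _ => g x) ω := by
    ext ω
    simp [Set.indicator_apply, hs]
  rw [hpt, integral_finsetSum _ fun x _ => (integrable_const _).indicator (hfib x)]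
  simp [integral_indicator_const _ (hfib _)]

theorem sum_measureReal_inter_eq_of_forall_mem [IsFiniteMeasure P] {α : Type*}
    [MeasurableSpace α] [MeasurableSingletonClass α] {W : Ω → α} (hW : Measurable W) {s : Finset α}
    (hs : ∀ ω, W ω ∈ s) {A : Set Ω} (hA : MeasurableSet A) :
    ∑ x ∈ s, P.real (A ∩ {ω | W ω = x}) = P.real A := by
  have hcover : A = ⋃ x ∈ s, A ∩ {ω | W ω = x} := by
    ext ω; simpa using fun _ => hs ω
  conv_rhs => rw [hcover]
  refine (measureReal_biUnion_finset (fun x _ y _ hxy => ?_)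
    (fun x _ => hA.inter (hW (measurableSet_singleton x)))).symm
  exact Disjoint.mono Set.inter_subset_right Set.inter_subset_right
    (Set.disjoint_left.mpr fun ω hx hy => hxy (hx.symm.trans hy))

theorem integral_sq_le_of_abs_le [IsProbabilityMeasure P] {f : Ω → ℝ} {C : ℝ}
    (h : ∀ ω, |f ω| ≤ C) : ∫ ω, f ω ^ 2 ∂P ≤ C ^ 2 := by
  refine (integral_mono_of_nonneg (ae_of_all _ fun ω => sq_nonneg _) (integrable_const (C ^ 2))
    (ae_of_all _ fun ω => ?_)).trans (by simp)
  exact sq_le_sq' (abs_le.mp (h ω)).1 (abs_le.mp (h ω)).2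

theorem memLp_of_abs_le [IsFiniteMeasure P] {f : Ω → ℝ} (hf : Measurable f) {C : ℝ}
    (h : ∀ ω, |f ω| ≤ C) (r : ℝ≥0∞) : MemLp f r P :=
  MemLp.of_bound hf.aestronglyMeasurable C (ae_of_all _ h)

end General

def twoStepDrift {Ω : Type*} (p q : ℝ) (X : ℕ → Ω → ℝ) (ω : Ω) : ℝ :=
  (p - q) * (X 1 ω + X 2 ω) / 2

section Walk

variable {Ω : Type*} {p q : ℝ} {X : ℕ → Ω → ℝ}

theorem measurable_sigmaUpTo {n k : ℕ} (hk : 1 ≤ k) (hkn : k ≤ n) :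
    Measurable[sigmaUpTo X n] (X k) := by
  obtain ⟨j, rfl⟩ : ∃ j, k = j + 1 := ⟨k - 1, by omega⟩
  exact (measurable_pi_apply (X := fun _ : Fin n => ℝ) ⟨j, by omega⟩).comp (comap_measurable _)

theorem measurable_twoStepDrift_sigmaUpTo {n : ℕ} (hn : 2 ≤ n) :
    Measurable[sigmaUpTo X n] (twoStepDrift p q X) :=
  (((measurable_sigmaUpTo le_rfl (by omega)).add (measurable_sigmaUpTo (by omega) hn)).const_mul
    _).div_const _

theorem abs_step_le_one (hXval : ∀ n, 1 ≤ n → ∀ ω, X n ω = 1 ∨ X n ω = -1 ∨ X n ω = 0)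
    {k : ℕ} (hk : 1 ≤ k) (ω : Ω) : |X k ω| ≤ 1 := by
  rcases hXval k hk ω with h | h | h <;> simp [h]

theorem abs_twoStepDrift_le_one (hpq : |p - q| ≤ 1)
    (hXval : ∀ n, 1 ≤ n → ∀ ω, X n ω = 1 ∨ X n ω = -1 ∨ X n ω = 0) (ω : Ω) :
    |twoStepDrift p q X ω| ≤ 1 := by
  have h12 : |X 1 ω + X 2 ω| ≤ 2 :=
    (abs_add_le _ _).trans <| by
      linarith [abs_step_le_one hXval le_rfl ω, abs_step_le_one hXval one_le_two ω]
  rw [twoStepDrift, abs_div, abs_mul, abs_two]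
  nlinarith [abs_nonneg (p - q), abs_nonneg (X 1 ω + X 2 ω)]

theorem abs_sum_sub_mul_twoStepDrift_le (hpq : |p - q| ≤ 1)
    (hXval : ∀ n, 1 ≤ n → ∀ ω, X n ω = 1 ∨ X n ω = -1 ∨ X n ω = 0) (n : ℕ) (ω : Ω) :
    |∑ k ∈ Finset.Icc 1 n, X k ω - n * twoStepDrift p q X ω| ≤ 2 * n := by
  have hsum : ∑ k ∈ Finset.Icc 1 n, X k ω - n * twoStepDrift p q X ω
      = ∑ k ∈ Finset.Icc 1 n, (X k ω - twoStepDrift p q X ω) := by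
    simp [Finset.sum_sub_distrib]
  rw [hsum]
  calc _ ≤ ∑ k ∈ Finset.Icc 1 n, |X k ω - twoStepDrift p q X ω| := Finset.abs_sum_le_sum_abs _ _
    _ ≤ ∑ _k ∈ Finset.Icc 1 n, (2 : ℝ) := Finset.sum_le_sum fun k hk => (abs_sub _ _).trans <| by
        linarith [abs_step_le_one hXval (Finset.mem_Icc.mp hk).1 ω,
          abs_twoStepDrift_le_one hpq hXval ω]
    _ = 2 * n := by simp [mul_comm]

theorem abs_sum_div_le_one (hXval : ∀ n, 1 ≤ n → ∀ ω, X n ω = 1 ∨ X n ω = -1 ∨ X n ω = 0)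
    (n : ℕ) (ω : Ω) : |(∑ k ∈ Finset.Icc 1 n, X k ω) / n| ≤ 1 := by
  have hsum : |∑ k ∈ Finset.Icc 1 n, X k ω| ≤ n :=
    (Finset.abs_sum_le_sum_abs _ _).trans <| (Finset.sum_le_sum fun k hk =>
      abs_step_le_one hXval (Finset.mem_Icc.mp hk).1 ω).trans (by simp)
  rw [abs_div, Nat.abs_cast]
  exact div_le_one_of_le₀ hsum (Nat.cast_nonneg n)

end Walk

section Martingale

variable {Ω : Type*} [MeasurableSpace Ω] {p q : ℝ} {X : ℕ → Ω → ℝ}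

theorem sigmaUpTo_le (hX : ∀ n, Measurable (X n)) (n : ℕ) :
    sigmaUpTo X n ≤ ‹MeasurableSpace Ω› :=
  (measurable_pi_lambda (fun ω (k : Fin n) => X (k + 1) ω) fun _ => hX _).comap_le

theorem measurable_twoStepDrift (hX : ∀ n, Measurable (X n)) :
    Measurable (twoStepDrift p q X) :=
  (measurable_twoStepDrift_sigmaUpTo le_rfl).mono (sigmaUpTo_le hX 2) le_rfl

variable {P : Measure Ω} [IsProbabilityMeasure P]

theorem condExp_step_eq_twoStepDrift (hXmeas : ∀ n, Measurable (X n))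
    (hXval : ∀ n, 1 ≤ n → ∀ ω, X n ω = 1 ∨ X n ω = -1 ∨ X n ω = 0)
    (hcondp : ∀ n : ℕ, 2 ≤ n →
      P[Set.indicator {ω | X (n + 1) ω = 1} (fun _ => (1 : ℝ)) | sigmaUpTo X n]
        =ᵐ[P] fun ω =>
          (p * ((if X 1 ω = 1 then (1 : ℝ) else 0) + (if X 2 ω = 1 then (1 : ℝ) else 0))
            + q * ((if X 1 ω = -1 then (1 : ℝ) else 0)
              + (if X 2 ω = -1 then (1 : ℝ) else 0))) / 2)
    (hcondq : ∀ n : ℕ, 2 ≤ n →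
      P[Set.indicator {ω | X (n + 1) ω = -1} (fun _ => (1 : ℝ)) | sigmaUpTo X n]
        =ᵐ[P] fun ω =>
          (q * ((if X 1 ω = 1 then (1 : ℝ) else 0) + (if X 2 ω = 1 then (1 : ℝ) else 0))
            + p * ((if X 1 ω = -1 then (1 : ℝ) else 0)
              + (if X 2 ω = -1 then (1 : ℝ) else 0))) / 2)
    {n : ℕ} (hn : 2 ≤ n) :
    P[X (n + 1) | sigmaUpTo X n] =ᵐ[P] twoStepDrift p q X := by
  have hind : ∀ c : ℝ, Integrable ({ω | X (n + 1) ω = c}.indicator fun _ => (1 : ℝ)) P :=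
    fun c => (integrable_const 1).indicator (hXmeas _ (measurableSet_singleton c))
  have hsplit : X (n + 1) = {ω | X (n + 1) ω = 1}.indicator (fun _ => 1)
      - {ω | X (n + 1) ω = -1}.indicator (fun _ => 1) := by
    ext ω
    rcases hXval (n + 1) (by omega) ω with h | h | h <;> norm_num [Set.indicator_apply, h]
  rw [hsplit]
  filter_upwards [condExp_sub (hind 1) (hind (-1)) (sigmaUpTo X n), hcondp n hn, hcondq n hn]
    with ω h h₁ h₂
  rw [h, Pi.sub_apply, h₁, h₂, twoStepDrift]
  rcases hXval 1 le_rfl ω with h₁ | h₁ | h₁ <;> rcases hXval 2 one_le_two ω with h₂ | h₂ | h₂ <;>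
    norm_num [h₁, h₂] <;> ring

theorem condExp_step_sub_twoStepDrift_eq_zero (hpq : |p - q| ≤ 1)
    (hXmeas : ∀ n, Measurable (X n))
    (hXval : ∀ n, 1 ≤ n → ∀ ω, X n ω = 1 ∨ X n ω = -1 ∨ X n ω = 0)
    (hdrift : ∀ n, 2 ≤ n → P[X (n + 1) | sigmaUpTo X n] =ᵐ[P] twoStepDrift p q X)
    {n : ℕ} (hn : 2 ≤ n) :
    P[fun ω => X (n + 1) ω - twoStepDrift p q X ω | sigmaUpTo X n] =ᵐ[P] 0 := by
  change P[X (n + 1) - twoStepDrift p q X | sigmaUpTo X n] =ᵐ[P] 0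
  have hY := memLp_of_abs_le (P := P) (measurable_twoStepDrift hXmeas)
    (abs_twoStepDrift_le_one hpq hXval) 1
  have hX := memLp_of_abs_le (P := P) (hXmeas (n + 1)) (abs_step_le_one hXval (by omega)) 1
  have hYY : P[twoStepDrift p q X | sigmaUpTo X n] = twoStepDrift p q X :=
    condExp_of_stronglyMeasurable (sigmaUpTo_le hXmeas n)
      (measurable_twoStepDrift_sigmaUpTo hn).stronglyMeasurable (hY.integrable le_rfl)
  filter_upwards [condExp_sub (hX.integrable le_rfl) (hY.integrable le_rfl) (sigmaUpTo X n),
    hdrift n hn] with ω h h'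
  simp [h, hYY, h']

theorem integral_sq_sum_sub_mul_twoStepDrift_le (hpq : |p - q| ≤ 1)
    (hXmeas : ∀ n, Measurable (X n))
    (hXval : ∀ n, 1 ≤ n → ∀ ω, X n ω = 1 ∨ X n ω = -1 ∨ X n ω = 0)
    (hdrift : ∀ n, 2 ≤ n → P[X (n + 1) | sigmaUpTo X n] =ᵐ[P] twoStepDrift p q X)
    {n : ℕ} (hn : 2 ≤ n) :
    ∫ ω, (∑ k ∈ Finset.Icc 1 n, X k ω - n * twoStepDrift p q X ω) ^ 2 ∂P ≤ 4 * n + 8 := by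
  induction n, hn using Nat.le_induction with
  | base =>
    refine (integral_sq_le_of_abs_le (abs_sum_sub_mul_twoStepDrift_le hpq hXval 2)).trans ?_
    norm_num
  | succ n hn ih =>
    have hstep : ∀ ω, ∑ k ∈ Finset.Icc 1 (n + 1), X k ω - ↑(n + 1) * twoStepDrift p q X ω
        = (∑ k ∈ Finset.Icc 1 n, X k ω - n * twoStepDrift p q X ω)
          + (X (n + 1) ω - twoStepDrift p q X ω) := fun ω => by
      rw [Finset.sum_Icc_succ_top (by omega)]; push_cast; ring
    have hUm : Measurable[sigmaUpTo X n]
        fun ω => ∑ k ∈ Finset.Icc 1 n, X k ω - n * twoStepDrift p q X ω :=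
      (Finset.measurable_sum _ fun k hk => measurable_sigmaUpTo (Finset.mem_Icc.mp hk).1
        (Finset.mem_Icc.mp hk).2).sub ((measurable_twoStepDrift_sigmaUpTo hn).const_mul _)
    have hVm : Measurable fun ω => X (n + 1) ω - twoStepDrift p q X ω :=
      (hXmeas _).sub (measurable_twoStepDrift hXmeas)
    have hV : ∀ ω, |X (n + 1) ω - twoStepDrift p q X ω| ≤ 2 := fun ω => (abs_sub _ _).trans <| by
      linarith [abs_step_le_one hXval (Nat.le_add_left 1 n) ω, abs_twoStepDrift_le_one hpq hXval ω]
    simp_rw [hstep]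
    rw [integral_sq_add_of_condExp_eq_zero (sigmaUpTo_le hXmeas n) hUm.stronglyMeasurable
      (memLp_of_abs_le (hUm.mono (sigmaUpTo_le hXmeas n) le_rfl)
        (abs_sum_sub_mul_twoStepDrift_le hpq hXval n) 2)
      (memLp_of_abs_le hVm hV 2) (condExp_step_sub_twoStepDrift_eq_zero hpq hXmeas hXval hdrift hn)]
    have := integral_sq_le_of_abs_le (P := P) hV
    push_cast
    linarith

theorem tendstoInMeasure_sum_div_twoStepDrift (hpq : |p - q| ≤ 1)
    (hXmeas : ∀ n, Measurable (X n))
    (hXval : ∀ n, 1 ≤ n → ∀ ω, X n ω = 1 ∨ X n ω = -1 ∨ X n ω = 0)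
    (hdrift : ∀ n, 2 ≤ n → P[X (n + 1) | sigmaUpTo X n] =ᵐ[P] twoStepDrift p q X) :
    TendstoInMeasure P (fun (n : ℕ) ω => (∑ k ∈ Finset.Icc 1 n, X k ω) / n) atTop
      (twoStepDrift p q X) := by
  have hm : ∀ n : ℕ, Measurable fun ω => (∑ k ∈ Finset.Icc 1 n, X k ω) / n - twoStepDrift p q X ω :=
    fun n => ((Finset.measurable_sum _ fun k _ => hXmeas k).div_const _).sub
      (measurable_twoStepDrift hXmeas)
  have hb : ∀ (n : ℕ) ω, |(∑ k ∈ Finset.Icc 1 n, X k ω) / n - twoStepDrift p q X ω| ≤ 2 :=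
    fun n ω => (abs_sub _ _).trans <| by
      linarith [abs_sum_div_le_one hXval n ω, abs_twoStepDrift_le_one hpq hXval ω]
  refine tendstoInMeasure_of_tendsto_integral_sq_sub
    (fun n => (memLp_of_abs_le (hm n) (hb n) 2).integrable_sq) ?_
  refine squeeze_zero' (Eventually.of_forall fun n => integral_nonneg fun ω => sq_nonneg _) ?_
    (tendsto_const_div_atTop_nhds_zero_nat 8)
  filter_upwards [eventually_ge_atTop 2] with n hn
  have hn' : (2 : ℝ) ≤ n := by exact_mod_cast hn
  have hscale : ∀ ω, ((∑ k ∈ Finset.Icc 1 n, X k ω) / n - twoStepDrift p q X ω) ^ 2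
      = (∑ k ∈ Finset.Icc 1 n, X k ω - n * twoStepDrift p q X ω) ^ 2 / n ^ 2 := fun ω => by
    field_simp
  simp_rw [hscale]
  rw [integral_div, div_le_div_iff₀ (by positivity) (by positivity)]
  nlinarith [integral_sq_sum_sub_mul_twoStepDrift_le hpq hXmeas hXval hdrift hn]

end Martingale

section Law

variable {Ω : Type*} [MeasurableSpace Ω] {P : Measure Ω} [IsProbabilityMeasure P]
  {p q r : ℝ} {X : ℕ → Ω → ℝ}

theorem integral_comp_twoStepDrift (hp : 0 ≤ p) (hq : 0 ≤ q) (hr : 0 ≤ r)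
    (hpqr : p + q + r = 1) (hXmeas : ∀ n, Measurable (X n))
    (hXval : ∀ n, 1 ≤ n → ∀ ω, X n ω = 1 ∨ X n ω = -1 ∨ X n ω = 0)
    (hX1p : P {ω | X 1 ω = 1} = ENNReal.ofReal p)
    (hX1q : P {ω | X 1 ω = -1} = ENNReal.ofReal q)
    (hX1r : P {ω | X 1 ω = 0} = ENNReal.ofReal r)
    (hX2p : P[Set.indicator {ω | X 2 ω = 1} (fun _ => (1 : ℝ)) | sigmaUpTo X 1]
      =ᵐ[P] fun ω =>
        p * (if X 1 ω = 1 then (1 : ℝ) else 0) + q * (if X 1 ω = -1 then (1 : ℝ) else 0))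
    (hX2q : P[Set.indicator {ω | X 2 ω = -1} (fun _ => (1 : ℝ)) | sigmaUpTo X 1]
      =ᵐ[P] fun ω =>
        q * (if X 1 ω = 1 then (1 : ℝ) else 0) + p * (if X 1 ω = -1 then (1 : ℝ) else 0))
    (g : ℝ → ℝ) :
    ∫ ω, g (twoStepDrift p q X ω) ∂P
      = p ^ 2 * g (p - q) + p * r * g ((p - q) / 2) + (p * q + q ^ 2 + r) * g 0
        + q * r * g (-((p - q) / 2)) + p * q * g (-(p - q)) := by
  have hT : ∀ k, 1 ≤ k → ∀ ω, X k ω ∈ ({1, -1, 0} : Finset ℝ) := by simpa using hXval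
  have hX1 : ∀ a, MeasurableSet[sigmaUpTo X 1] {ω | X 1 ω = a} :=
    fun a => measurable_sigmaUpTo le_rfl le_rfl (measurableSet_singleton a)
  have hplus : ∀ a, P.real ({ω | X 1 ω = a} ∩ {ω | X 2 ω = 1})
      = (p * (if a = 1 then 1 else 0) + q * (if a = -1 then 1 else 0)) * P.real {ω | X 1 ω = a} :=
    fun a => measureReal_inter_eq_mul_of_condExp_indicator (sigmaUpTo_le hXmeas 1) (hX1 a)
      (hXmeas 2 (measurableSet_singleton 1)) hX2p fun ω (hω : X 1 ω = a) => by rw [hω]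
  have hminus : ∀ a, P.real ({ω | X 1 ω = a} ∩ {ω | X 2 ω = -1})
      = (q * (if a = 1 then 1 else 0) + p * (if a = -1 then 1 else 0)) * P.real {ω | X 1 ω = a} :=
    fun a => measureReal_inter_eq_mul_of_condExp_indicator (sigmaUpTo_le hXmeas 1) (hX1 a)
      (hXmeas 2 (measurableSet_singleton (-1))) hX2q fun ω (hω : X 1 ω = a) => by rw [hω]
  have hzero : ∀ a, P.real ({ω | X 1 ω = a} ∩ {ω | X 2 ω = 0})
      = P.real {ω | X 1 ω = a} - P.real ({ω | X 1 ω = a} ∩ {ω | X 2 ω = 1})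
        - P.real ({ω | X 1 ω = a} ∩ {ω | X 2 ω = -1}) := fun a => by
    have := sum_measureReal_inter_eq_of_forall_mem (P := P) (A := {ω | X 1 ω = a}) (hXmeas 2)
      (hT 2 one_le_two) (hXmeas 1 (measurableSet_singleton a))
    rw [Finset.sum_insert (by norm_num), Finset.sum_insert (by norm_num),
      Finset.sum_singleton] at this
    linarith
  have hcell : ∀ a b : ℝ, {ω | (X 1 ω, X 2 ω) = (a, b)} = {ω | X 1 ω = a} ∩ {ω | X 2 ω = b} :=
    fun a b => by ext ω; simp
  have h1 : P.real {ω | X 1 ω = 1} = p := by rw [measureReal_def, hX1p, ENNReal.toReal_ofReal hp]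
  have hm1 : P.real {ω | X 1 ω = -1} = q := by rw [measureReal_def, hX1q, ENNReal.toReal_ofReal hq]
  have h0 : P.real {ω | X 1 ω = 0} = r := by rw [measureReal_def, hX1r, ENNReal.toReal_ofReal hr]
  refine (integral_comp_eq_sum_of_forall_mem ((hXmeas 1).prodMk (hXmeas 2))
      (fun ω => Finset.mem_product.2 ⟨hT 1 le_rfl ω, hT 2 one_le_two ω⟩)
      fun x : ℝ × ℝ => g ((p - q) * (x.1 + x.2) / 2)).trans ?_
  norm_num [Finset.sum_product, hcell, hzero, hplus, hminus, h1, hm1, h0]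
  rw [show r = 1 - p - q by linarith]
  ring_nf

end Law

def erwdLimitLaw (p q r : ℝ) : Measure ℝ :=
  ENNReal.ofReal (p ^ 2) • Measure.dirac (p - q)
    + ENNReal.ofReal (p * r) • Measure.dirac ((p - q) / 2)
    + ENNReal.ofReal (p * q + q ^ 2 + r) • Measure.dirac 0
    + ENNReal.ofReal (q * r) • Measure.dirac (-((p - q) / 2))
    + ENNReal.ofReal (p * q) • Measure.dirac (-(p - q))

theorem integral_erwdLimitLaw {p q r : ℝ} (hp : 0 ≤ p) (hq : 0 ≤ q) (hr : 0 ≤ r)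
    (f : ℝ → ℝ) :
    ∫ x, f x ∂erwdLimitLaw p q r
      = p ^ 2 * f (p - q) + p * r * f ((p - q) / 2) + (p * q + q ^ 2 + r) * f 0
        + q * r * f (-((p - q) / 2)) + p * q * f (-(p - q)) := by
  have hint : ∀ c a : ℝ, Integrable f (ENNReal.ofReal c • Measure.dirac a) :=
    fun c a => (integrable_dirac (by simp)).smul_measure ENNReal.ofReal_ne_top
  rw [erwdLimitLaw, integral_add_measure, integral_add_measure, integral_add_measure,
    integral_add_measure]
  · simp only [integral_smul_measure, integral_dirac, smul_eq_mul]
    rw [ENNReal.toReal_ofReal (by positivity), ENNReal.toReal_ofReal (by positivity),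
      ENNReal.toReal_ofReal (by positivity), ENNReal.toReal_ofReal (by positivity),
      ENNReal.toReal_ofReal (by positivity)]
  all_goals simp only [integrable_add_measure, hint, and_self]

theorem erwd_first_two_steps_memory_weak_limit_general
    {Ω : Type*} [MeasurableSpace Ω] (P : Measure Ω) [IsProbabilityMeasure P]
    (p q r : ℝ) (hp : 0 < p) (hq : 0 < q)
    (hr : 0 < r) (hpqr : p + q + r = 1)
    (X : ℕ → Ω → ℝ) (hXmeas : ∀ n, Measurable (X n))
    (hXval : ∀ n, 1 ≤ n → ∀ ω, X n ω = 1 ∨ X n ω = -1 ∨ X n ω = 0)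
    (hX1p : P {ω | X 1 ω = 1} = ENNReal.ofReal p)
    (hX1q : P {ω | X 1 ω = -1} = ENNReal.ofReal q)
    (hX1r : P {ω | X 1 ω = 0} = ENNReal.ofReal r)
    (hX2p : P[Set.indicator {ω | X 2 ω = 1} (fun _ => (1 : ℝ)) | sigmaUpTo X 1]
      =ᵐ[P] fun ω =>
        p * (if X 1 ω = 1 then (1 : ℝ) else 0) + q * (if X 1 ω = -1 then (1 : ℝ) else 0))
    (hX2q : P[Set.indicator {ω | X 2 ω = -1} (fun _ => (1 : ℝ)) | sigmaUpTo X 1]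
      =ᵐ[P] fun ω =>
        q * (if X 1 ω = 1 then (1 : ℝ) else 0) + p * (if X 1 ω = -1 then (1 : ℝ) else 0))
    (hcondp : ∀ n : ℕ, 2 ≤ n →
      P[Set.indicator {ω | X (n + 1) ω = 1} (fun _ => (1 : ℝ)) | sigmaUpTo X n]
        =ᵐ[P] fun ω =>
          (p * ((if X 1 ω = 1 then (1 : ℝ) else 0) + (if X 2 ω = 1 then (1 : ℝ) else 0))
            + q * ((if X 1 ω = -1 then (1 : ℝ) else 0)
              + (if X 2 ω = -1 then (1 : ℝ) else 0))) / 2)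
    (hcondq : ∀ n : ℕ, 2 ≤ n →
      P[Set.indicator {ω | X (n + 1) ω = -1} (fun _ => (1 : ℝ)) | sigmaUpTo X n]
        =ᵐ[P] fun ω =>
          (q * ((if X 1 ω = 1 then (1 : ℝ) else 0) + (if X 2 ω = 1 then (1 : ℝ) else 0))
            + p * ((if X 1 ω = -1 then (1 : ℝ) else 0)
              + (if X 2 ω = -1 then (1 : ℝ) else 0))) / 2)
    (S : ℕ → Ω → ℝ) (hS : ∀ n ω, S n ω = ∑ k ∈ Finset.Icc 1 n, X k ω)
    :
    TendstoInDist (fun n : ℕ => Measure.map (fun ω => S n ω / n) P)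
      (ENNReal.ofReal (p ^ 2) • Measure.dirac (p - q)
        + ENNReal.ofReal (p * r) • Measure.dirac ((p - q) / 2)
        + ENNReal.ofReal (p * q + q ^ 2 + r) • Measure.dirac 0
        + ENNReal.ofReal (q * r) • Measure.dirac (-((p - q) / 2))
        + ENNReal.ofReal (p * q) • Measure.dirac (-(p - q))) ∧
    Tendsto (fun n : ℕ => ∫ ω, S n ω / n ∂P) atTop
      (𝓝 ((p - q) ^ 2 / 2 * (1 + p - q))) ∧
    Tendsto (fun n : ℕ => variance (fun ω => S n ω / n) P) atTop
      (𝓝 ((p - q) ^ 2 / 4 *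
        ((p + q) * (1 + 3 * p - q) - (p - q) ^ 2 * (1 + (p - q)) ^ 2))) := by
  obtain rfl : S = fun n ω => ∑ k ∈ Finset.Icc 1 n, X k ω := funext₂ hS
  beta_reduce
  have hpq : |p - q| ≤ 1 := abs_sub_le_iff.mpr ⟨by linarith, by linarith⟩
  have hZ : ∀ n : ℕ, Measurable fun ω => (∑ k ∈ Finset.Icc 1 n, X k ω) / n :=
    fun n => (Finset.measurable_sum _ fun k _ => hXmeas k).div_const _
  have hconv := tendstoInMeasure_sum_div_twoStepDrift hpq hXmeas hXval
    fun n hn => condExp_step_eq_twoStepDrift hXmeas hXval hcondp hcondq hn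
  have hlaw := integral_comp_twoStepDrift hp.le hq.le hr.le hpqr hXmeas hXval hX1p hX1q hX1r
    hX2p hX2q
  have hmoment₁ := hlaw fun x => x
  have hmoment₂ := hlaw fun x => x ^ 2
  beta_reduce at hmoment₁ hmoment₂
  have hmean := tendsto_integral_comp_of_tendstoInMeasure hconv
    (fun n => (hZ n).aestronglyMeasurable) continuous_id' (abs_sum_div_le_one hXval)
  have hsq := tendsto_integral_comp_of_tendstoInMeasure hconv
    (fun n => (hZ n).aestronglyMeasurable) (continuous_pow 2) (C := 1) fun n ω => by
    rw [abs_pow]; exact pow_le_one₀ (abs_nonneg _) (abs_sum_div_le_one hXval n ω)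
  refine ⟨fun f => ?_, ?_, ?_⟩
  · change Tendsto _ atTop (𝓝 (∫ x, f x ∂erwdLimitLaw p q r))
    simp only [integral_map (hZ _).aemeasurable f.continuous.aestronglyMeasurable]
    rw [integral_erwdLimitLaw hp.le hq.le hr.le, ← hlaw]
    exact tendsto_integral_comp_of_tendstoInMeasure hconv (fun n => (hZ n).aestronglyMeasurable)
      f.continuous fun n ω => f.norm_coe_le_norm _
  · convert hmean using 2
    rw [hmoment₁, show r = 1 - p - q by linarith]
    ring
  · simp only [variance_eq_sub (memLp_of_abs_le (hZ _) (abs_sum_div_le_one hXval _) 2),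
      Pi.pow_apply]
    convert hsq.sub (hmean.pow 2) using 2
    rw [hmoment₁, hmoment₂, show r = 1 - p - q by linarith]
    ring

/-- for the ERWD remembering only the first two steps, `Sₙ/n` converges
in distribution to the five-point law
`p²·δ_{p−q} + pr·δ_{(p−q)/2} + (pq+q²+r)·δ₀ + qr·δ_{−(p−q)/2} + pq·δ_{−(p−q)}`,
together with convergence of the mean and the variance of `Sₙ/n`. -/
theorem erwd_first_two_steps_memory_weak_limit
    {Ω : Type*} [MeasurableSpace Ω] (P : Measure Ω) [IsProbabilityMeasure P]
    (p q r : ℝ) (hp : 0 < p) (hp1 : p < 1) (hq : 0 < q) (hq1 : q < 1)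
    (hr : 0 < r) (hr1 : r < 1) (hpqr : p + q + r = 1)
    (X : ℕ → Ω → ℝ) (hXmeas : ∀ n, Measurable (X n))
    (hXval : ∀ n, 1 ≤ n → ∀ ω, X n ω = 1 ∨ X n ω = -1 ∨ X n ω = 0)
    (hX1p : P {ω | X 1 ω = 1} = ENNReal.ofReal p)
    (hX1q : P {ω | X 1 ω = -1} = ENNReal.ofReal q)
    (hX1r : P {ω | X 1 ω = 0} = ENNReal.ofReal r)
    (hX2p : P[Set.indicator {ω | X 2 ω = 1} (fun _ => (1 : ℝ)) | sigmaUpTo X 1]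
      =ᵐ[P] fun ω =>
        p * (if X 1 ω = 1 then (1 : ℝ) else 0) + q * (if X 1 ω = -1 then (1 : ℝ) else 0))
    (hX2q : P[Set.indicator {ω | X 2 ω = -1} (fun _ => (1 : ℝ)) | sigmaUpTo X 1]
      =ᵐ[P] fun ω =>
        q * (if X 1 ω = 1 then (1 : ℝ) else 0) + p * (if X 1 ω = -1 then (1 : ℝ) else 0))
    (hcondp : ∀ n : ℕ, 2 ≤ n →
      P[Set.indicator {ω | X (n + 1) ω = 1} (fun _ => (1 : ℝ)) | sigmaUpTo X n]
        =ᵐ[P] fun ω =>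
          (p * ((if X 1 ω = 1 then (1 : ℝ) else 0) + (if X 2 ω = 1 then (1 : ℝ) else 0))
            + q * ((if X 1 ω = -1 then (1 : ℝ) else 0)
              + (if X 2 ω = -1 then (1 : ℝ) else 0))) / 2)
    (hcondq : ∀ n : ℕ, 2 ≤ n →
      P[Set.indicator {ω | X (n + 1) ω = -1} (fun _ => (1 : ℝ)) | sigmaUpTo X n]
        =ᵐ[P] fun ω =>
          (q * ((if X 1 ω = 1 then (1 : ℝ) else 0) + (if X 2 ω = 1 then (1 : ℝ) else 0))
            + p * ((if X 1 ω = -1 then (1 : ℝ) else 0)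
              + (if X 2 ω = -1 then (1 : ℝ) else 0))) / 2)
    (S : ℕ → Ω → ℝ) (hS : ∀ n ω, S n ω = ∑ k ∈ Finset.Icc 1 n, X k ω)
    :
    TendstoInDist (fun n : ℕ => Measure.map (fun ω => S n ω / n) P)
      (ENNReal.ofReal (p ^ 2) • Measure.dirac (p - q)
        + ENNReal.ofReal (p * r) • Measure.dirac ((p - q) / 2)
        + ENNReal.ofReal (p * q + q ^ 2 + r) • Measure.dirac 0
        + ENNReal.ofReal (q * r) • Measure.dirac (-((p - q) / 2))
        + ENNReal.ofReal (p * q) • Measure.dirac (-(p - q))) ∧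
    Tendsto (fun n : ℕ => ∫ ω, S n ω / n ∂P) atTop
      (𝓝 ((p - q) ^ 2 / 2 * (1 + p - q))) ∧
    Tendsto (fun n : ℕ => variance (fun ω => S n ω / n) P) atTop
      (𝓝 ((p - q) ^ 2 / 4 *
        ((p + q) * (1 + 3 * p - q) - (p - q) ^ 2 * (1 + (p - q)) ^ 2))) :=
  erwd_first_two_steps_memory_weak_limit_general P p q r hp hq hr hpqr X hXmeas hXval hX1p hX1q hX1r
    hX2p hX2q hcondp hcondq S hS
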